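/- arXiv:1407.2032 — 8 statements merged into one kernel-verified Lean document; each statement's English description precedes it below -/
import Mathlib

section
/- Let p be an odd prime and m, k positive integers with 1 ≤ v₂(m) < v₂(k), where v₂ denotes the 2-adic valuation. Then the number of pairs (x,y) ∈ F_{p^m}² satisfying both x² + y² = 0 and x^{p^k+1} + y^{p^k+1} = 0 equals 2p^m − 1. -/
/-!
Since `p ^ m ≡ 1 (mod 4)`, the field contains a square root `i` of `-1`, so `x² + y² = 0` cuts out
the two lines `y = ± i x`, which meet only at the origin: `2 p ^ m - 1` points. Since
`p ^ k + 1 ≡ 2 (mod 4)`, the second equation is implied by the first: `y² = -x²` gives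
`y ^ (p ^ k + 1) = (-x²) ^ ((p ^ k + 1) / 2) = -x ^ (p ^ k + 1)`, the exponent being odd.
-/

lemma Nat.pow_mod_four_eq_one_of_odd_of_even {p m : ℕ} (hp : Odd p) (hm : Even m) :
    p ^ m % 4 = 1 := by
  have hsq : p ^ 2 % 4 = 1 := by
    obtain ⟨a, rfl⟩ := hp
    ring_nf
    omega
  obtain ⟨j, rfl⟩ := hm
  rw [← two_mul, pow_mul, Nat.pow_mod, hsq, one_pow, Nat.one_mod]

lemma pow_add_pow_eq_zero_of_sq_add_sq_eq_zero {R : Type*} [CommRing R] {x y : R}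
    (h : x ^ 2 + y ^ 2 = 0) {n : ℕ} (hn : n % 4 = 2) : x ^ n + y ^ n = 0 := by
  obtain ⟨t, rfl⟩ : ∃ t, n = 2 * (2 * t + 1) := ⟨n / 4, by omega⟩
  rw [pow_mul, pow_mul, eq_neg_of_add_eq_zero_right h, Odd.neg_pow ⟨t, rfl⟩, add_neg_cancel]

lemma sq_add_sq_eq_zero_iff {R : Type*} [CommRing R] [IsDomain R] {i : R} (hi : i ^ 2 = -1)
    {x y : R} : x ^ 2 + y ^ 2 = 0 ↔ y = i * x ∨ y = -(i * x) := by
  have hfactor : x ^ 2 + y ^ 2 = (y - i * x) * (y + i * x) := by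
    linear_combination (x ^ 2) * hi
  rw [hfactor, mul_eq_zero, sub_eq_zero, add_eq_zero_iff_eq_neg]

lemma Set.ncard_setOf_snd_eq {α β : Type*} (f : α → β) :
    {xy : α × β | xy.2 = f xy.1}.ncard = Nat.card α := by
  have hgraph : {xy : α × β | xy.2 = f xy.1} = Set.range fun x => (x, f x) := by
    ext ⟨x, y⟩
    simp [eq_comm]
  rw [hgraph, Set.ncard_range_of_injective fun _ _ h => congrArg Prod.fst h]

lemma card_union_lines {F : Type*} [Field F] [Finite F] {a b : F} (hab : a ≠ b) :
    Nat.card {xy : F × F // xy.2 = a * xy.1 ∨ xy.2 = b * xy.1} = 2 * Nat.card F - 1 := by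
  have hinter : {xy : F × F | xy.2 = a * xy.1} ∩ {xy | xy.2 = b * xy.1} = {0} := by
    ext ⟨x, y⟩
    simp only [Set.mem_inter_iff, Set.mem_ofPred_eq, Set.mem_singleton_iff, Prod.mk_eq_zero]
    constructor
    · rintro ⟨rfl, hx⟩
      have hx0 : x = 0 := by_contra fun hx0 => hab ((mul_left_inj' hx0).mp hx)
      simp [hx0]
    · rintro ⟨rfl, rfl⟩
      simp
  have hsum := Set.ncard_union_add_ncard_inter {xy : F × F | xy.2 = a * xy.1}
    {xy | xy.2 = b * xy.1}
  rw [hinter, Set.ncard_singleton, Set.ncard_setOf_snd_eq, Set.ncard_setOf_snd_eq] at hsum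
  refine (Nat.card_coe_set_eq {xy : F × F | xy.2 = a * xy.1 ∨ xy.2 = b * xy.1}).trans ?_
  rw [Set.ofPred_or]
  have : 0 < Nat.card F := Nat.card_pos
  omega

lemma FiniteField.card_sq_add_sq_eq_zero_and_pow_add_pow_eq_zero {F : Type*} [Field F]
    [Fintype F] (hF : Fintype.card F % 4 = 1) {n : ℕ} (hn : n % 4 = 2) :
    Nat.card {xy : F × F // xy.1 ^ 2 + xy.2 ^ 2 = 0 ∧ xy.1 ^ n + xy.2 ^ n = 0} =
      2 * Fintype.card F - 1 := by
  obtain ⟨i, hi⟩ := FiniteField.isSquare_neg_one_iff.mpr (by omega : Fintype.card F % 4 ≠ 3)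
  have hi2 : i ^ 2 = -1 := by rw [sq, hi]
  have h2 : (2 : F) ≠ 0 :=
    Ring.two_ne_zero (by rw [Ne, FiniteField.even_card_iff_char_two]; omega)
  have hi_ne : i ≠ -i := fun h => h2 (by linear_combination (-i) * h + 2 * hi2)
  have hiff (xy : F × F) : (xy.1 ^ 2 + xy.2 ^ 2 = 0 ∧ xy.1 ^ n + xy.2 ^ n = 0) ↔
      (xy.2 = i * xy.1 ∨ xy.2 = -i * xy.1) := by
    rw [neg_mul, ← sq_add_sq_eq_zero_iff hi2]
    exact ⟨And.left, fun h => ⟨h, pow_add_pow_eq_zero_of_sq_add_sq_eq_zero h hn⟩⟩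
  rw [Nat.card_congr (Equiv.subtypeEquivRight hiff), card_union_lines hi_ne,
    Nat.card_eq_fintype_card]

theorem stmt_0_general (p m k : ℕ) (hpo : Odd p)
    (hv1 : 1 ≤ padicValNat 2 m) (hv2 : padicValNat 2 m < padicValNat 2 k)
    (F : Type*) [Field F] [Fintype F] (hF : Fintype.card F = p ^ m) :
    Nat.card {xy : F × F //
        xy.1 ^ 2 + xy.2 ^ 2 = 0 ∧ xy.1 ^ (p ^ k + 1) + xy.2 ^ (p ^ k + 1) = 0} =
      2 * p ^ m - 1 := by
  have hm_even : Even m := even_iff_two_dvd.mpr (dvd_of_one_le_padicValNat hv1)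
  have hk_even : Even k := even_iff_two_dvd.mpr (dvd_of_one_le_padicValNat (hv1.trans hv2.le))
  have hpk := Nat.pow_mod_four_eq_one_of_odd_of_even hpo hk_even
  rw [FiniteField.card_sq_add_sq_eq_zero_and_pow_add_pow_eq_zero
    (hF ▸ Nat.pow_mod_four_eq_one_of_odd_of_even hpo hm_even) (by omega), hF]

theorem stmt_0 (p m k : ℕ) (hp : p.Prime) (hpo : Odd p) (hm : 0 < m) (hk : 0 < k)
    (hv1 : 1 ≤ padicValNat 2 m) (hv2 : padicValNat 2 m < padicValNat 2 k)
    (F : Type*) [Field F] [Fintype F] (hF : Fintype.card F = p ^ m) :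
    Nat.card {xy : F × F //
        xy.1 ^ 2 + xy.2 ^ 2 = 0 ∧ xy.1 ^ (p ^ k + 1) + xy.2 ^ (p ^ k + 1) = 0} =
      2 * p ^ m - 1 :=
  stmt_0_general p m k hpo hv1 hv2 F hF
end

section
/- Let p be an odd prime and m, k positive integers with v₂(k) < v₂(m). If p^k ≡ 3 (mod 4), then the only pair (x,y) ∈ F_{p^m}² satisfying both x² + y² = 0 and x^{p^k+1} + y^{p^k+1} = 0 is (0,0). -/
/-! Since `p ^ k + 1` is divisible by `4`, squaring `x ^ 2 = -y ^ 2` gives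
`x ^ (p ^ k + 1) = y ^ (p ^ k + 1)`, so the second equation becomes `2 y ^ (p ^ k + 1) = 0`.
The field has odd order, hence odd characteristic, so `y = 0` and then `x = 0`. -/

theorem pow_eq_pow_of_sq_eq_neg_sq {R : Type*} [CommRing R] {x y : R} (h : x ^ 2 = -y ^ 2)
    {n : ℕ} (hn : 4 ∣ n) : x ^ n = y ^ n := by
  obtain ⟨t, rfl⟩ := hn
  rw [show 4 * t = 2 * (2 * t) by ring, pow_mul x, pow_mul y, h, (even_two_mul t).neg_pow]

theorem eq_zero_of_sq_add_sq_eq_zero_of_pow_add_pow_eq_zero {R : Type*} [CommRing R]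
    [NoZeroDivisors R] (h2 : (2 : R) ≠ 0) {n : ℕ} (hn : 4 ∣ n) (hn0 : n ≠ 0) {x y : R}
    (hsq : x ^ 2 + y ^ 2 = 0) (hpow : x ^ n + y ^ n = 0) : x = 0 ∧ y = 0 := by
  have hxy : x ^ n = y ^ n := pow_eq_pow_of_sq_eq_neg_sq (eq_neg_of_add_eq_zero_left hsq) hn
  have hy : y = 0 := by
    rw [hxy, ← two_mul] at hpow
    exact pow_eq_zero_iff hn0 |>.mp ((mul_eq_zero.mp hpow).resolve_left h2)
  subst hy
  exact ⟨pow_eq_zero_iff two_ne_zero |>.mp (by simpa using hsq), rfl⟩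

theorem FiniteField.two_ne_zero_of_odd_card {F : Type*} [Field F] [Fintype F]
    (h : Odd (Fintype.card F)) : (2 : F) ≠ 0 :=
  Ring.two_ne_zero fun hchar ↦ by
    simp [Nat.odd_iff, even_card_of_char_two hchar] at h

theorem stmt_1_general (p m k : ℕ) (hpo : Odd p) (hmod : p ^ k % 4 = 3)
    (F : Type*) [Field F] [Fintype F] (hF : Fintype.card F = p ^ m) :
    ∀ x y : F, x ^ 2 + y ^ 2 = 0 → x ^ (p ^ k + 1) + y ^ (p ^ k + 1) = 0 →
      x = 0 ∧ y = 0 := by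
  intro x y hsq hpow
  have h2 : (2 : F) ≠ 0 := FiniteField.two_ne_zero_of_odd_card (hF ▸ hpo.pow)
  exact eq_zero_of_sq_add_sq_eq_zero_of_pow_add_pow_eq_zero h2 (by omega) (by positivity)
    hsq hpow

theorem stmt_1 (p m k : ℕ) (hp : p.Prime) (hpo : Odd p) (hm : 0 < m) (hk : 0 < k)
    (hv : padicValNat 2 k < padicValNat 2 m) (hmod : p ^ k % 4 = 3)
    (F : Type*) [Field F] [Fintype F] (hF : Fintype.card F = p ^ m) :
    ∀ x y : F, x ^ 2 + y ^ 2 = 0 → x ^ (p ^ k + 1) + y ^ (p ^ k + 1) = 0 →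
      x = 0 ∧ y = 0 :=
  stmt_1_general p m k hpo hmod F hF
end

section
/- Let p be an odd prime, m, k positive integers with d = gcd(m,k) and v₂(k) < v₂(m), and let π be a primitive element of F_{p^m}. Then there is no y ∈ F_{p^m}* with y^{p^k−1} = −π^{(p^k−1)/2}. -/
/-!
Write `N = p^m - 1`, `K = p^k - 1` and `d = gcd(m, k)`. Since `π` has order `N`, `-1 = π^(N/2)`,
so the equation says that `π^(N/2 + K/2)` is a `K`-th power; in a cyclic group of order `N` this
forces `gcd(N, K) = p^d - 1` to divide `N/2 + K/2`. With `q = p^d` odd,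
`(q^n - 1)/(q - 1) = 1 + q + ⋯ + q^(n-1) ≡ n (mod 2)`, so `2(q - 1) ∣ q^n - 1` exactly when `n` is
even. The 2-adic hypothesis makes `m/d` even and `k/d` odd, so `q - 1` divides `N/2` but not `K/2`.
-/

open Finset

theorem gcd_orderOf_dvd_of_pow_eq_pow {G : Type*} [Group G] {g y : G}
    (hy : y ∈ Subgroup.zpowers g) {n j : ℕ} (h : y ^ n = g ^ j) : (orderOf g).gcd n ∣ j := by
  obtain ⟨a, rfl⟩ := Subgroup.mem_zpowers_iff.mp hy
  have hmod : a * n ≡ j [ZMOD orderOf g] := by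
    rw [← zpow_eq_zpow_iff_modEq, zpow_mul, zpow_natCast, zpow_natCast, h]
  have hdvd : ((orderOf g).gcd n : ℤ) ∣ a * n - j :=
    (Int.natCast_dvd_natCast.mpr (Nat.gcd_dvd_left _ _)).trans hmod.symm.dvd
  have hn : ((orderOf g).gcd n : ℤ) ∣ a * n :=
    (Int.natCast_dvd_natCast.mpr (Nat.gcd_dvd_right _ _)).mul_left a
  exact Int.natCast_dvd_natCast.mp (by simpa using dvd_sub hn hdvd)

theorem IsPrimitiveRoot.pow_div_two_eq_neg_one {R : Type*} [CommRing R] [NoZeroDivisors R]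
    {ζ : R} {n : ℕ} (h : IsPrimitiveRoot ζ n) (hn : Even n) (hn0 : n ≠ 0) :
    ζ ^ (n / 2) = -1 := by
  have h2 := h.pow_of_dvd (by obtain ⟨r, rfl⟩ := hn; omega) (Nat.div_dvd_of_dvd hn.two_dvd)
  rw [Nat.div_div_self hn.two_dvd hn0] at h2
  exact h2.eq_neg_one_of_two_right

namespace Nat

theorem two_mul_sub_one_dvd_pow_sub_one_iff {q : ℕ} (hq : Odd q) (hq1 : 1 < q) (n : ℕ) :
    2 * (q - 1) ∣ q ^ n - 1 ↔ Even n := by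
  have hgeom : q ^ n - 1 = (q - 1) * ∑ i ∈ range n, q ^ i := by
    have h := geom_sum_mul_add (q - 1) n
    rw [Nat.sub_add_cancel hq1.le] at h
    rw [← h, mul_comm, Nat.add_sub_cancel]
  have hparity : ((∑ i ∈ range n, q ^ i : ℕ) : ZMod 2) = n := by
    simp [hq.natCast_zmod_two]
  rw [hgeom, mul_comm 2, Nat.mul_dvd_mul_iff_left (by omega), ← even_iff_two_dvd,
    ← ZMod.natCast_eq_zero_iff_even, hparity, ZMod.natCast_eq_zero_iff_even]

theorem not_sub_one_dvd_pow_sub_one_div_two_add {q a b : ℕ} (hq : Odd q) (hq1 : 1 < q)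
    (ha : Even a) (hb : Odd b) : ¬ q - 1 ∣ (q ^ a - 1) / 2 + (q ^ b - 1) / 2 := by
  have hqa := (two_mul_sub_one_dvd_pow_sub_one_iff hq hq1 a).mpr ha
  have hqb := mt (two_mul_sub_one_dvd_pow_sub_one_iff hq hq1 b).mp (Nat.not_even_iff_odd.mpr hb)
  have heven : ∀ c, 2 ∣ q ^ c - 1 := fun c => (Odd.sub_odd hq.pow odd_one).two_dvd
  rw [Nat.dvd_add_right ((Nat.dvd_div_iff_mul_dvd (heven a)).mpr hqa),
    Nat.dvd_div_iff_mul_dvd (heven b)]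
  exact hqb

theorem dvd_div_gcd_and_not_dvd_div_gcd_of_padicValNat_lt {ℓ m k : ℕ} [Fact ℓ.Prime]
    (hk : k ≠ 0) (hv : padicValNat ℓ k < padicValNat ℓ m) :
    ℓ ∣ m / m.gcd k ∧ ¬ ℓ ∣ k / m.gcd k := by
  have hm : m ≠ 0 := by rintro rfl; simp at hv
  have hd : 0 < m.gcd k := Nat.gcd_pos_of_pos_right _ (Nat.pos_of_ne_zero hk)
  have hmd : m / m.gcd k ≠ 0 := (Nat.div_pos (Nat.gcd_le_left _ (Nat.pos_of_ne_zero hm)) hd).ne'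
  have hkd : k / m.gcd k ≠ 0 := (Nat.div_pos (Nat.gcd_le_right _ (Nat.pos_of_ne_zero hk)) hd).ne'
  have hval : padicValNat ℓ (k / m.gcd k) < padicValNat ℓ (m / m.gcd k) := by
    have hvm := padicValNat.mul (p := ℓ) hd.ne' hmd
    have hvk := padicValNat.mul (p := ℓ) hd.ne' hkd
    rw [Nat.mul_div_cancel' (Nat.gcd_dvd_left m k)] at hvm
    rw [Nat.mul_div_cancel' (Nat.gcd_dvd_right m k)] at hvk
    omega
  have hℓm : ℓ ∣ m / m.gcd k := dvd_of_one_le_padicValNat (by omega)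
  refine ⟨hℓm, fun hℓk => (Fact.out : ℓ.Prime).one_lt.ne' ?_⟩
  exact Nat.dvd_one.mp ((Nat.coprime_div_gcd_div_gcd hd) ▸ Nat.dvd_gcd hℓm hℓk)
end Nat

theorem stmt_4 (p m k : ℕ) (hp : p.Prime) (hpo : Odd p) (hm : 0 < m) (hk : 0 < k)
    (hv : padicValNat 2 k < padicValNat 2 m)
    (F : Type*) [Field F] [Fintype F] (hF : Fintype.card F = p ^ m)
    (π : Fˣ) (hπ : ∀ x : Fˣ, x ∈ Subgroup.zpowers π) :
    ¬ ∃ y : F, y ≠ 0 ∧ y ^ (p ^ k - 1) = -(π : F) ^ ((p ^ k - 1) / 2) := by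
  rintro ⟨y, hy0, hy⟩
  have hp1 := hp.one_lt
  have horder : orderOf π = p ^ m - 1 := by
    rw [orderOf_eq_card_of_forall_mem_zpowers hπ, Nat.card_units, Nat.card_eq_fintype_card, hF]
  have hneg : (π : F) ^ ((p ^ m - 1) / 2) = -1 := by
    refine IsPrimitiveRoot.pow_div_two_eq_neg_one ?_ (Nat.Odd.sub_odd hpo.pow odd_one) ?_
    · rw [IsPrimitiveRoot.coe_units_iff, ← horder]
      exact IsPrimitiveRoot.orderOf π
    · have := Nat.one_lt_pow hm.ne' hp1
      omega
  have hpow : Units.mk0 y hy0 ^ (p ^ k - 1) = π ^ ((p ^ m - 1) / 2 + (p ^ k - 1) / 2) := by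
    ext
    simp [pow_add, hneg, hy]
  have hdvd := gcd_orderOf_dvd_of_pow_eq_pow (hπ _) hpow
  rw [horder, Nat.pow_sub_one_gcd_pow_sub_one] at hdvd
  obtain ⟨hmd, hkd⟩ := Nat.dvd_div_gcd_and_not_dvd_div_gcd_of_padicValNat_lt (ℓ := 2) hk.ne' hv
  have hpm : p ^ m = (p ^ m.gcd k) ^ (m / m.gcd k) := by
    rw [← pow_mul, Nat.mul_div_cancel' (Nat.gcd_dvd_left m k)]
  have hpk : p ^ k = (p ^ m.gcd k) ^ (k / m.gcd k) := by
    rw [← pow_mul, Nat.mul_div_cancel' (Nat.gcd_dvd_right m k)]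
  rw [hpm, hpk] at hdvd
  exact Nat.not_sub_one_dvd_pow_sub_one_div_two_add hpo.pow
    (Nat.one_lt_pow (Nat.gcd_pos_of_pos_left _ hm).ne' hp1) (even_iff_two_dvd.mpr hmd)
    (Nat.not_even_iff_odd.mp fun h => hkd h.two_dvd) hdvd
end

section
/- Let p be an odd prime, m, k positive integers, π a primitive element of F_{p^m}, and suppose x, y ∈ F_{p^m}* satisfy x² + y² = π and x^{p^k+1} + y^{p^k+1} = −π^{(p^k+1)/2}. Then (x y^{p^k} − x^{p^k} y)² = 0, and hence x = λy for some λ ∈ F_{p^d}*, where d = gcd(m,k). -/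
/-!
With `q = p ^ k`, Frobenius gives `(x² + y²)^(q+1) = (x² + y²)(x^(2q) + y^(2q))`, whence
`(x y^q - x^q y)² = (x² + y²)^(q+1) - (x^(q+1) + y^(q+1))²`. The hypotheses make the right-hand
side `π^(q+1) - π^(q+1) = 0` (as `q + 1` is even), so `x y^q = x^q y` and `λ = x / y` is fixed
by the `q`-th power Frobenius. Being also fixed by the `p^m`-th power map, `λ` is a periodic
point of `a ↦ a^p` of periods `k` and `m`, hence of period `gcd m k`.
-/

theorem sq_mul_pow_sub_pow_mul {R : Type*} [CommRing R] (p : ℕ) [ExpChar R p] (k : ℕ)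
    (x y : R) :
    (x * y ^ p ^ k - x ^ p ^ k * y) ^ 2 =
      (x ^ 2 + y ^ 2) ^ (p ^ k + 1) - (x ^ (p ^ k + 1) + y ^ (p ^ k + 1)) ^ 2 := by
  rw [pow_succ (x ^ 2 + y ^ 2), add_pow_expChar_pow]
  ring

theorem pow_pow_gcd_eq_self {M : Type*} [Monoid M] {a : M} {p m k : ℕ}
    (hm : a ^ p ^ m = a) (hk : a ^ p ^ k = a) : a ^ p ^ Nat.gcd m k = a := by
  have hperiodic (n : ℕ) : a ^ p ^ n = a ↔ Function.IsPeriodicPt (· ^ p) n a := by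
    rw [Function.IsPeriodicPt, Function.IsFixedPt, pow_iterate]
  exact (hperiodic _).2 (((hperiodic m).1 hm).gcd ((hperiodic k).1 hk))

theorem div_pow_eq_div_of_mul_pow_eq_pow_mul {K : Type*} [Field K] {x y : K} {n : ℕ}
    (hy : y ≠ 0) (h : x * y ^ n = x ^ n * y) : (x / y) ^ n = x / y := by
  rw [div_pow, div_eq_div_iff (pow_ne_zero n hy) hy, h]

theorem stmt_7_general (p m k : ℕ) (hp : p.Prime) (hpo : Odd p)
    (F : Type*) [Field F] [Fintype F] (hF : Fintype.card F = p ^ m)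
    (π : Fˣ)
    (x y : F) (hx : x ≠ 0) (hy : y ≠ 0)
    (h1 : x ^ 2 + y ^ 2 = (π : F))
    (h2 : x ^ (p ^ k + 1) + y ^ (p ^ k + 1) = -(π : F) ^ ((p ^ k + 1) / 2)) :
    (x * y ^ (p ^ k) - x ^ (p ^ k) * y) ^ 2 = 0 ∧
    ∃ l : F, l ≠ 0 ∧ l ^ (p ^ Nat.gcd m k) = l ∧ x = l * y := by
  have : Fact p.Prime := ⟨hp⟩
  have : CharP F p := charP_of_card_eq_prime_pow hF
  have hzero : (x * y ^ p ^ k - x ^ p ^ k * y) ^ 2 = 0 := by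
    rw [sq_mul_pow_sub_pow_mul p, h1, h2, neg_sq, ← pow_mul,
      Nat.div_mul_cancel hpo.pow.add_one.two_dvd, sub_self]
  have hfixed_k : (x / y) ^ p ^ k = x / y :=
    div_pow_eq_div_of_mul_pow_eq_pow_mul hy
      (sub_eq_zero.mp (pow_eq_zero_iff two_ne_zero |>.mp hzero))
  have hfixed_m : (x / y) ^ p ^ m = x / y := hF ▸ FiniteField.pow_card _
  exact ⟨hzero, x / y, div_ne_zero hx hy, pow_pow_gcd_eq_self hfixed_m hfixed_k,
    (div_mul_cancel₀ x hy).symm⟩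

theorem stmt_7 (p m k : ℕ) (hp : p.Prime) (hpo : Odd p) (hm : 0 < m) (hk : 0 < k)
    (F : Type*) [Field F] [Fintype F] (hF : Fintype.card F = p ^ m)
    (π : Fˣ) (hπ : ∀ x : Fˣ, x ∈ Subgroup.zpowers π)
    (x y : F) (hx : x ≠ 0) (hy : y ≠ 0)
    (h1 : x ^ 2 + y ^ 2 = (π : F))
    (h2 : x ^ (p ^ k + 1) + y ^ (p ^ k + 1) = -(π : F) ^ ((p ^ k + 1) / 2)) :
    (x * y ^ (p ^ k) - x ^ (p ^ k) * y) ^ 2 = 0 ∧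
    ∃ l : F, l ≠ 0 ∧ l ^ (p ^ Nat.gcd m k) = l ∧ x = l * y :=
  stmt_7_general p m k hp hpo F hF π x y hx hy h1 h2
end

section
/- Let p be an odd prime, m, k positive integers with 1 ≤ v₂(m) < v₂(k), and π a primitive element of F_{p^m}. Then the number of triples (x,y,z) with x ∈ F_{p^m}* and y,z ∈ F_{p^m} satisfying (x^{p^k−1}y + π^{(p^k−1)/2} y^{p^k})² + (x^{p^k−1}z + π^{(p^k−1)/2} z^{p^k})² = 0 equals (2p^m − 1)(p^m − 1). -/
/-!
For `x ≠ 0` the map `L_x y = x ^ (p ^ k - 1) * y + π ^ d * y ^ p ^ k`, `d = (p ^ k - 1) / 2`, is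
additive, and it is injective: `L_x w = 0` with `w ≠ 0` gives `(π * (w / x) ^ 2) ^ d = -1`. By
lifting the exponent, `v₂(p ^ k - 1) > v₂(p ^ m - 1)`, so the 2-part of `|Fˣ|` divides `d`; raising
to the odd part of `|Fˣ|` then sends `u ^ d` to `1` but `-1` to `-1`. Hence
`(x, y, z) ↦ (x, L_x y, L_x z)` is a bijection onto `Fˣ × {u ^ 2 + v ^ 2 = 0}`, and as `m` is even,
`-1 = i ^ 2` is a square, so the conic is the union of the lines `u = ± i v`: `2 p ^ m - 1` points.
-/

open Nat

theorem pow_ne_of_orderOf_eq_two {G : Type*} [Group G] [Finite G] {z : G} (hz : orderOf z = 2)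
    {d : ℕ} (hd : ordProj[2] (Nat.card G) ∣ d) (u : G) : u ^ d ≠ z := by
  intro h
  set N := ordCompl[2] (Nat.card G)
  have hN : Odd N := (Nat.coprime_ordCompl Nat.prime_two Nat.card_pos.ne').odd_of_left
  have hcard : Nat.card G ∣ d * N := by
    rw [← Nat.ordProj_mul_ordCompl_eq_self (Nat.card G) 2]
    exact mul_dvd_mul_right hd N
  have hdvd : orderOf (u ^ d) ∣ N := by
    refine orderOf_dvd_of_pow_eq_one ?_
    obtain ⟨r, hr⟩ := hcard
    rw [← pow_mul, hr, pow_mul, pow_card_eq_one', one_pow]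
  rw [h, hz] at hdvd
  exact Nat.not_even_iff_odd.mpr hN (even_iff_two_dvd.mpr hdvd)

theorem FiniteField.pow_ne_neg_one {F : Type*} [Field F] [Finite F] (hF : ringChar F ≠ 2)
    {d : ℕ} (hd : ordProj[2] (Nat.card F - 1) ∣ d) (u : F) : u ^ d ≠ -1 := by
  intro h
  have hu : u ≠ 0 := by
    rintro rfl
    rcases eq_or_ne d 0 with rfl | hd0
    · exact Ring.neg_one_ne_one_of_char_ne_two hF (by simpa using h.symm)
    · simp [zero_pow hd0] at h
  have hz : orderOf (-1 : Fˣ) = 2 := by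
    rw [← orderOf_units, Units.val_neg, Units.val_one, orderOf_neg_one, if_neg hF]
  rw [← Nat.card_units] at hd
  exact pow_ne_of_orderOf_eq_two hz hd (Units.mk0 u hu) (Units.ext (by simpa using h))

theorem padicValNat_two_pow_sub_one_lt {p m k : ℕ} (hp1 : 1 < p) (hp : Odd p)
    (hm : 1 ≤ padicValNat 2 m) (hmk : padicValNat 2 m < padicValNat 2 k) :
    padicValNat 2 (p ^ m - 1) < padicValNat 2 (p ^ k - 1) := by
  have lte (n : ℕ) (hn : 1 ≤ padicValNat 2 n) :
      padicValNat 2 (p ^ n - 1) + 1 =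
        padicValNat 2 (p + 1) + padicValNat 2 (p - 1) + padicValNat 2 n := by
    have hn0 : n ≠ 0 := by rintro rfl; simp at hn
    have hev : Even n := even_iff_two_dvd.mpr (dvd_of_one_le_padicValNat hn)
    simpa using padicValNat.pow_two_sub_pow hp1 (Nat.Odd.sub_odd hp odd_one).two_dvd
      (Nat.not_even_iff_odd.mpr hp ∘ even_iff_two_dvd.mpr) hn0 hev
  have := lte m hm
  have := lte k (hm.trans hmk.le)
  omega

theorem FiniteField.isSquare_neg_one_of_card_eq_pow {F : Type*} [Field F] [Fintype F] {p m : ℕ}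
    (hp : Odd p) (hm : Even m) (hF : Fintype.card F = p ^ m) : IsSquare (-1 : F) := by
  obtain ⟨r, rfl⟩ := hm
  obtain ⟨j, hj⟩ : Odd (p ^ r) := hp.pow
  have hcard : Fintype.card F = 4 * (j * j + j) + 1 := by rw [hF, ← two_mul, pow_mul', hj]; ring
  rw [FiniteField.isSquare_neg_one_iff, hcard]
  omega

theorem bijective_mul_add_mul_pow_expChar_pow {F : Type*} [Field F] [Finite F] (p : ℕ)
    [ExpChar F p] (k : ℕ) {a c : F} (h : ∀ w : F, w ≠ 0 → a + c * w ^ (p ^ k - 1) ≠ 0) :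
    Function.Bijective fun y : F => a * y + c * y ^ p ^ k := by
  refine Finite.injective_iff_bijective.mp fun y y' hyy => by_contra fun hne => ?_
  have hw : y - y' ≠ 0 := sub_ne_zero.mpr hne
  have hpk : p ^ k - 1 + 1 = p ^ k := Nat.sub_add_cancel (Nat.one_le_pow _ _ (expChar_pos F p))
  have hker : (a + c * (y - y') ^ (p ^ k - 1)) * (y - y') = 0 := by
    rw [add_mul, mul_assoc, ← pow_succ, hpk, sub_pow_expChar_pow]
    linear_combination hyy
  exact h _ hw ((mul_eq_zero.mp hker).resolve_right hw)

theorem FiniteField.card_sq_add_sq_eq_zero {F : Type*} [Field F] [Finite F] (hF : ringChar F ≠ 2)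
    (h : IsSquare (-1 : F)) :
    Nat.card {b : F × F // b.1 ^ 2 + b.2 ^ 2 = 0} = 2 * Nat.card F - 1 := by
  obtain ⟨i, hi⟩ := h
  have hi0 : i ≠ 0 := by rintro rfl; simp at hi
  let line (j : F) : Set (F × F) := Set.range fun v => (j * v, v)
  have hline (j : F) : (line j).ncard = Nat.card F :=
    Set.ncard_range_of_injective fun v w h => (Prod.ext_iff.mp h).2
  have hunion : {b : F × F | b.1 ^ 2 + b.2 ^ 2 = 0} = line i ∪ line (-i) := by
    ext ⟨u, v⟩
    simp only [Set.mem_ofPred_eq, Set.mem_union, line, Set.mem_range, Prod.mk.injEq,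
      exists_eq_right]
    constructor
    · intro huv
      have : (u - i * v) * (u + i * v) = 0 := by linear_combination huv + v ^ 2 * hi
      rcases mul_eq_zero.mp this with h | h
      · exact Or.inl (by linear_combination -h)
      · exact Or.inr (by linear_combination -h)
    · rintro (rfl | rfl) <;> linear_combination -v ^ 2 * hi
  have hinter : line i ∩ line (-i) = {0} := by
    ext ⟨u, v⟩
    simp only [Set.mem_inter_iff, line, Set.mem_range, Prod.mk.injEq, exists_eq_right,
      Set.mem_singleton_iff, Prod.mk_eq_zero]
    constructor
    · rintro ⟨rfl, h⟩
      have : (2 * i) * v = 0 := by linear_combination -h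
      have hv : v = 0 :=
        (mul_eq_zero.mp this).resolve_left (mul_ne_zero (Ring.two_ne_zero hF) hi0)
      simp [hv]
    · rintro ⟨rfl, rfl⟩
      simp
  have := Set.ncard_union_add_ncard_inter (line i) (line (-i))
  rw [← hunion, hinter, Set.ncard_singleton, hline, hline] at this
  change Set.ncard {b : F × F | b.1 ^ 2 + b.2 ^ 2 = 0} = _
  omega

theorem Nat.card_subtype_map_prod_eq_mul {α β : Type*} {P : α → Prop} {Q : β × β → Prop}
    (f : α → β → β) (hf : ∀ a, P a → (f a).Bijective) :
    Nat.card {t : α × β × β // P t.1 ∧ Q (f t.1 t.2.1, f t.1 t.2.2)} =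
      Nat.card {a // P a} * Nat.card {b // Q b} := by
  rw [← Nat.card_prod]
  refine Nat.card_congr (Equiv.ofBijective
    (fun t => (⟨t.1.1, t.2.1⟩, ⟨(f t.1.1 t.1.2.1, f t.1.1 t.1.2.2), t.2.2⟩)) ⟨?_, ?_⟩)
  · rintro ⟨⟨a, y, z⟩, ha, _⟩ ⟨⟨a', y', z'⟩, _⟩ h
    simp only [Prod.mk.injEq, Subtype.mk.injEq] at h
    obtain ⟨rfl, hy, hz⟩ := h
    simp [(hf a ha).injective hy, (hf a ha).injective hz]
  · rintro ⟨⟨a, ha⟩, ⟨⟨u, v⟩, huv⟩⟩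
    obtain ⟨y, rfl⟩ := (hf a ha).surjective u
    obtain ⟨z, rfl⟩ := (hf a ha).surjective v
    exact ⟨⟨(a, y, z), ha, huv⟩, rfl⟩

theorem stmt_11_general (p m k : ℕ) (hp : p.Prime) (hpo : Odd p)
    (hv1 : 1 ≤ padicValNat 2 m) (hv2 : padicValNat 2 m < padicValNat 2 k)
    (F : Type*) [Field F] [Fintype F] (hF : Fintype.card F = p ^ m)
    (π : Fˣ) :
    Nat.card {t : F × F × F // t.1 ≠ 0 ∧
        (t.1 ^ (p ^ k - 1) * t.2.1
            + (π : F) ^ ((p ^ k - 1) / 2) * t.2.1 ^ (p ^ k)) ^ 2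
          + (t.1 ^ (p ^ k - 1) * t.2.2
            + (π : F) ^ ((p ^ k - 1) / 2) * t.2.2 ^ (p ^ k)) ^ 2 = 0} =
      (2 * p ^ m - 1) * (p ^ m - 1) := by
  have := Fact.mk hp
  have := charP_of_card_eq_prime_pow hF
  have hchar : ringChar F ≠ 2 := by
    rw [ringChar.eq F p]; rintro rfl; exact Nat.not_even_iff_odd.mpr hpo even_two
  set d := (p ^ k - 1) / 2
  have hn : p ^ k - 1 = 2 * d :=
    (Nat.two_mul_div_two_of_even (Nat.Odd.sub_odd hpo.pow odd_one)).symm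
  have hd : ordProj[2] (Nat.card F - 1) ∣ d := by
    rw [Nat.card_eq_fintype_card, hF, Nat.factorization_def _ Nat.prime_two]
    refine Nat.dvd_div_of_mul_dvd ?_
    rw [← pow_succ']
    refine (pow_dvd_pow 2 ?_).trans pow_padicValNat_dvd
    exact padicValNat_two_pow_sub_one_lt hp.one_lt hpo hv1 hv2
  have hbij (x : F) (hx : x ≠ 0) :
      Function.Bijective fun y : F => x ^ (p ^ k - 1) * y + (π : F) ^ d * y ^ p ^ k := by
    refine bijective_mul_add_mul_pow_expChar_pow p k fun w hw h => ?_
    rw [hn, add_eq_zero_iff_eq_neg'] at h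
    apply FiniteField.pow_ne_neg_one hchar hd (π * (w / x) ^ 2)
    rw [mul_pow, div_pow, div_pow, ← pow_mul, ← pow_mul, ← mul_div_assoc, h,
      neg_div_self (pow_ne_zero _ hx)]
  have hsq := FiniteField.isSquare_neg_one_of_card_eq_pow hpo
    (even_iff_two_dvd.mpr (dvd_of_one_le_padicValNat hv1)) hF
  refine (Nat.card_subtype_map_prod_eq_mul (Q := fun b : F × F => b.1 ^ 2 + b.2 ^ 2 = 0) _
    hbij).trans ?_
  rw [FiniteField.card_sq_add_sq_eq_zero hchar hsq, ← Nat.card_congr unitsEquivNeZero,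
    Nat.card_units, Nat.card_eq_fintype_card, hF, mul_comm]

theorem stmt_11 (p m k : ℕ) (hp : p.Prime) (hpo : Odd p) (hm : 0 < m) (hk : 0 < k)
    (hv1 : 1 ≤ padicValNat 2 m) (hv2 : padicValNat 2 m < padicValNat 2 k)
    (F : Type*) [Field F] [Fintype F] (hF : Fintype.card F = p ^ m)
    (π : Fˣ) (hπ : ∀ x : Fˣ, x ∈ Subgroup.zpowers π) :
    Nat.card {t : F × F × F // t.1 ≠ 0 ∧
        (t.1 ^ (p ^ k - 1) * t.2.1
            + (π : F) ^ ((p ^ k - 1) / 2) * t.2.1 ^ (p ^ k)) ^ 2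
          + (t.1 ^ (p ^ k - 1) * t.2.2
            + (π : F) ^ ((p ^ k - 1) / 2) * t.2.2 ^ (p ^ k)) ^ 2 = 0} =
      (2 * p ^ m - 1) * (p ^ m - 1) :=
  stmt_11_general p m k hp hpo hv1 hv2 F hF π
end

section
/- Let p be an odd prime, m, k positive integers with d = gcd(m,k). If v₂(k) < v₂(m), then p^d − 1 divides (p^m − 1)/2 but p^d − 1 does not divide (p^k − 1)/2; consequently p^d − 1 does not divide (p^k − 1)/2 + (p^m − 1)/2. -/
/-!
Write `d = gcd m k`, `m = d t`, `k = d s` and `q = p ^ d`. The hypothesis on 2-adic valuations makes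
`t` even and `s` odd. For odd `q > 1`, `(q ^ n - 1) / (q - 1) = 1 + q + ⋯ + q ^ (n - 1)` is a sum
of `n` odd numbers, so `2 (q - 1)` divides `q ^ n - 1` exactly when `n` is even; that is,
`q - 1 ∣ (q ^ n - 1) / 2` if and only if `n` is even.
-/

open Finset

theorem Nat.even_geom_sum_iff {q : ℕ} (hq : Odd q) (n : ℕ) :
    Even (∑ i ∈ range n, q ^ i) ↔ Even n := by
  induction n with
  | zero => simp
  | succ n ih =>
    simp [sum_range_succ, Nat.even_add, ih, Nat.even_add_one, Nat.not_even_iff_odd.mpr hq.pow]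

theorem Nat.two_mul_sub_one_dvd_pow_sub_one_iff_s12 {q : ℕ} (hq : Odd q) (hq1 : 1 < q) (n : ℕ) :
    2 * (q - 1) ∣ q ^ n - 1 ↔ Even n := by
  rw [← geom_sum_mul_of_one_le hq1.le, Nat.mul_dvd_mul_iff_right (by omega),
    even_iff_two_dvd.symm, Nat.even_geom_sum_iff hq]

theorem Nat.sub_one_dvd_pow_sub_one_div_two_iff {q : ℕ} (hq : Odd q) (hq1 : 1 < q) (n : ℕ) :
    q - 1 ∣ (q ^ n - 1) / 2 ↔ Even n := by
  have h2 : 2 ∣ q ^ n - 1 := (Nat.Odd.sub_odd hq.pow odd_one).two_dvd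
  rw [Nat.dvd_div_iff_mul_dvd h2, Nat.two_mul_sub_one_dvd_pow_sub_one_iff_s12 hq hq1]

theorem Nat.even_div_gcd_and_odd_div_gcd_of_padicValNat_lt {m k : ℕ} (hk : k ≠ 0)
    (hv : padicValNat 2 k < padicValNat 2 m) :
    Even (m / m.gcd k) ∧ Odd (k / m.gcd k) := by
  have hm : m ≠ 0 := by rintro rfl; simp at hv
  have hg : m.gcd k ≠ 0 := Nat.gcd_ne_zero_left hm
  have hvm := padicValNat.div_of_dvd (p := 2) (Nat.gcd_dvd_left m k)
  have hvg : padicValNat 2 (m.gcd k) ≤ padicValNat 2 k :=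
    padicValNat_dvd_iff_le hk |>.mp (pow_padicValNat_dvd.trans (Nat.gcd_dvd_right m k))
  have ht : Even (m / m.gcd k) := by
    rw [even_iff_two_dvd]
    exact dvd_of_one_le_padicValNat (by omega)
  have hcop := Nat.coprime_div_gcd_div_gcd (Nat.pos_of_ne_zero hg)
  exact ⟨ht, (hcop.coprime_dvd_left ht.two_dvd).odd_of_left⟩

theorem stmt_12_general (p m k : ℕ) (hp : p.Prime) (hpo : Odd p) (hk : 0 < k)
    (hv : padicValNat 2 k < padicValNat 2 m) :
    (p ^ Nat.gcd m k - 1) ∣ (p ^ m - 1) / 2 ∧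
    ¬ (p ^ Nat.gcd m k - 1) ∣ (p ^ k - 1) / 2 ∧
    ¬ (p ^ Nat.gcd m k - 1) ∣ ((p ^ k - 1) / 2 + (p ^ m - 1) / 2) := by
  obtain ⟨ht, hs⟩ := Nat.even_div_gcd_and_odd_div_gcd_of_padicValNat_lt hk.ne' hv
  have hd : 0 < Nat.gcd m k := Nat.gcd_pos_of_pos_right m hk
  have key : ∀ n, Nat.gcd m k ∣ n →
      ((p ^ Nat.gcd m k - 1) ∣ (p ^ n - 1) / 2 ↔ Even (n / Nat.gcd m k)) := by
    rintro n ⟨c, rfl⟩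
    rw [pow_mul, Nat.mul_div_cancel_left _ hd]
    exact Nat.sub_one_dvd_pow_sub_one_div_two_iff hpo.pow (Nat.one_lt_pow hd.ne' hp.one_lt) c
  have hdm := (key m (Nat.gcd_dvd_left m k)).mpr ht
  have hdk := (key k (Nat.gcd_dvd_right m k)).not.mpr (Nat.not_even_iff_odd.mpr hs)
  exact ⟨hdm, hdk, fun h => hdk ((Nat.dvd_add_left hdm).mp h)⟩

theorem stmt_12 (p m k : ℕ) (hp : p.Prime) (hpo : Odd p) (hm : 0 < m) (hk : 0 < k)
    (hv : padicValNat 2 k < padicValNat 2 m) :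
    (p ^ Nat.gcd m k - 1) ∣ (p ^ m - 1) / 2 ∧
    ¬ (p ^ Nat.gcd m k - 1) ∣ (p ^ k - 1) / 2 ∧
    ¬ (p ^ Nat.gcd m k - 1) ∣ ((p ^ k - 1) / 2 + (p ^ m - 1) / 2) :=
  stmt_12_general p m k hp hpo hk hv
end

section
/- Let p be an odd prime, m, k positive integers with v₂(k) < v₂(m) and p^k ≡ 3 (mod 4), π a primitive element of F_{p^m}, and define S(α,β) = Σ_{x∈F_{p^m}} (ζ_p^{Tr(α x^{p^k+1} + β x²)} + ζ_p^{Tr(α π^{(p^k+1)/2} x^{p^k+1} − β π x²)}). Then Σ_{α,β ∈ F_{p^m}} S(α,β)² = 4p^{2m}. -/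
/-!
Write `ψ` for the canonical additive character `x ↦ ζ_p ^ Tr x`, `q = p ^ m`, `E = p ^ k + 1` and
`c = π ^ (E / 2)`. Expanding the square and summing over `α, β` first, orthogonality of `ψ` turns
the left side into `q²` times the number of pairs `(x, y)` solving four systems:
`x^E + y^E = x² + y² = 0`, `x^E + c y^E = x² - π y² = 0` (and its mirror image) and
`c (x^E + y^E) = -π (x² + y²) = 0`. As `π` generates `F_qˣ` with `q` odd, it is a nonsquare, so
`x² = π y²` forces `x = y = 0`. As `4 ∣ E`, `x² = -y²` gives `x^E = (x²)^(E/2) = y^E`, so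
`x^E + y^E = 0` forces `y = 0`. Hence only `(0, 0)` contributes, once to each of the four systems.
-/

open Finset

noncomputable def traceAddChar (p : ℕ) [NeZero p] (F : Type*) [Field F] [Algebra (ZMod p) F] :
    AddChar F ℂ :=
  ZMod.stdAddChar.compAddMonoidHom (Algebra.trace (ZMod p) F).toAddMonoidHom

lemma traceAddChar_apply (p : ℕ) [NeZero p] {F : Type*} [Field F] [Algebra (ZMod p) F] (z : F) :
    traceAddChar p F z =
      Complex.exp (2 * Real.pi * Complex.I * ((Algebra.trace (ZMod p) F z).val : ℂ) / p) := by
  rw [traceAddChar, AddChar.compAddMonoidHom_apply, ZMod.stdAddChar_apply, ZMod.toCircle_apply]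
  rfl

lemma isPrimitive_traceAddChar (p : ℕ) [Fact p.Prime] (F : Type*) [Field F] [Finite F]
    [Algebra (ZMod p) F] : (traceAddChar p F).IsPrimitive := by
  refine AddChar.IsPrimitive.of_ne_one fun h ↦ ?_
  obtain ⟨z, hz⟩ := Algebra.trace_surjective (ZMod p) F 1
  have : ZMod.stdAddChar (1 : ZMod p) = ZMod.stdAddChar (0 : ZMod p) := by
    rw [← hz, AddChar.map_zero_eq_one]
    exact DFunLike.congr_fun h z
  exact one_ne_zero (ZMod.injective_stdAddChar this)

lemma sum_sum_addChar_mul_add_mul {R R' : Type*} [CommRing R] [Fintype R] [DecidableEq R]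
    [CommRing R'] [IsDomain R'] {ψ : AddChar R R'} (hψ : ψ.IsPrimitive) (s t : R) :
    ∑ α : R, ∑ β : R, ψ (α * s + β * t) =
      if s = 0 ∧ t = 0 then (Fintype.card R : R') ^ 2 else 0 := by
  simp_rw [AddChar.map_add_eq_mul, ← sum_mul_sum, AddChar.sum_mulShift _ hψ]
  by_cases hs : s = 0 <;> by_cases ht : t = 0 <;> simp [hs, ht, sq]

lemma sum_sum_sq_sum {ι κ ν R : Type*} [Fintype ι] [Fintype κ] [Fintype ν] [CommSemiring R]
    (f : ι → κ → ν → R) :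
    ∑ a, ∑ b, (∑ x, f a b x) ^ 2 = ∑ x, ∑ y, ∑ a, ∑ b, f a b x * f a b y := by
  simp only [sq, sum_mul_sum]
  calc _ = ∑ a, ∑ x, ∑ y, ∑ b, f a b x * f a b y := sum_congr rfl fun _ _ ↦ sum_comm_cycle.symm
    _ = _ := sum_comm_cycle.symm

lemma eq_zero_of_sq_sub_mul_sq_eq_zero {K : Type*} [Field K] {w x y : K} (hw : ¬IsSquare w)
    (h : x ^ 2 - w * y ^ 2 = 0) : x = 0 ∧ y = 0 := by
  by_cases hy : y = 0
  · subst hy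
    exact ⟨pow_eq_zero_iff two_ne_zero |>.mp (by linear_combination h), rfl⟩
  · exact absurd ⟨x / y, by field_simp; linear_combination -h⟩ hw

lemma eq_zero_of_pow_add_pow_eq_zero {R : Type*} [CommRing R] [NoZeroDivisors R]
    (h2 : (2 : R) ≠ 0) {E : ℕ} (hE : 4 ∣ E) (hE0 : E ≠ 0) {x y : R}
    (hpow : x ^ E + y ^ E = 0) (hsq : x ^ 2 + y ^ 2 = 0) : x = 0 ∧ y = 0 := by
  obtain ⟨d, rfl⟩ := hE
  have hx2 : x ^ 2 = -y ^ 2 := by linear_combination hsq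
  have hxy : x ^ (4 * d) = y ^ (4 * d) := by
    rw [show 4 * d = 2 * (2 * d) by ring, pow_mul, pow_mul, hx2, pow_mul, pow_mul, neg_sq]
  have hy : y = 0 := by
    have : (2 : R) * y ^ (4 * d) = 0 := by linear_combination hpow - hxy
    exact pow_eq_zero_iff hE0 |>.mp ((mul_eq_zero.mp this).resolve_left h2)
  subst hy
  exact ⟨pow_eq_zero_iff two_ne_zero |>.mp (by simpa using hx2), rfl⟩

lemma not_isSquare_of_forall_mem_zpowers {F : Type*} [Field F] [Fintype F] (hF : ringChar F ≠ 2)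
    {π : Fˣ} (hπ : ∀ x : Fˣ, x ∈ Subgroup.zpowers π) : ¬IsSquare (π : F) := by
  rintro ⟨a, ha⟩
  obtain ⟨b, hb⟩ := FiniteField.exists_nonsquare hF
  have hb0 : b ≠ 0 := by rintro rfl; exact hb ⟨0, by simp⟩
  have ha0 : a ≠ 0 := by rintro rfl; simp at ha
  obtain ⟨n, hn : π ^ n = Units.mk0 b hb0⟩ := hπ (Units.mk0 b hb0)
  have : IsSquare π := ⟨Units.mk0 a ha0, Units.ext ha⟩
  exact hb (by simpa [hn] using (this.zpow n).map (Units.coeHom F))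

lemma sum_sum_mul_twisted {R R' : Type*} [CommRing R] [Fintype R] [CommRing R']
    (ψ : AddChar R R') (c w u₁ v₁ u₂ v₂ : R) :
    ∑ α : R, ∑ β : R,
        (ψ (α * u₁ + β * v₁) + ψ (α * c * u₁ - β * w * v₁)) *
          (ψ (α * u₂ + β * v₂) + ψ (α * c * u₂ - β * w * v₂)) =
      ∑ α : R, ∑ β : R, ψ (α * (u₁ + u₂) + β * (v₁ + v₂)) +
        ∑ α : R, ∑ β : R, ψ (α * (u₁ + c * u₂) + β * (v₁ - w * v₂)) +
        ∑ α : R, ∑ β : R, ψ (α * (c * u₁ + u₂) + β * (v₂ - w * v₁)) +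
        ∑ α : R, ∑ β : R, ψ (α * (c * (u₁ + u₂)) + β * (-w * (v₁ + v₂))) := by
  simp only [← sum_add_distrib]
  refine sum_congr rfl fun α _ ↦ sum_congr rfl fun β _ ↦ ?_
  simp only [add_mul, mul_add, ← AddChar.map_add_eq_mul]
  ring_nf

section TwistedSum

variable {F R' : Type*} [Field F] [Fintype F] [DecidableEq F] [CommRing R'] [IsDomain R']
  {ψ : AddChar F R'} {E : ℕ} {c w : F}

lemma sum_sum_mul_twisted_pow (hψ : ψ.IsPrimitive) (hE : 4 ∣ E) (hE0 : E ≠ 0) (hc : c ≠ 0)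
    (hw : ¬IsSquare w) (x y : F) :
    ∑ α : F, ∑ β : F,
        (ψ (α * x ^ E + β * x ^ 2) + ψ (α * c * x ^ E - β * w * x ^ 2)) *
          (ψ (α * y ^ E + β * y ^ 2) + ψ (α * c * y ^ E - β * w * y ^ 2)) =
      if x = 0 ∧ y = 0 then 4 * (Fintype.card F : R') ^ 2 else 0 := by
  rw [sum_sum_mul_twisted]
  simp only [sum_sum_addChar_mul_add_mul hψ]
  by_cases hxy : x = 0 ∧ y = 0
  · obtain ⟨rfl, rfl⟩ := hxy
    simp [zero_pow hE0]
    ring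
  have hw0 : w ≠ 0 := by rintro rfl; exact hw IsSquare.zero
  -- in characteristic 2 every element of a finite field is a square
  have h2 : (2 : F) ≠ 0 := Ring.two_ne_zero fun h ↦ hw (FiniteField.isSquare_of_char_two h w)
  have h₁ : ¬(x ^ E + y ^ E = 0 ∧ x ^ 2 + y ^ 2 = 0) := fun h ↦
    hxy (eq_zero_of_pow_add_pow_eq_zero h2 hE hE0 h.1 h.2)
  have h₂ : ¬(x ^ E + c * y ^ E = 0 ∧ x ^ 2 - w * y ^ 2 = 0) := fun h ↦
    hxy (eq_zero_of_sq_sub_mul_sq_eq_zero hw h.2)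
  have h₃ : ¬(c * x ^ E + y ^ E = 0 ∧ y ^ 2 - w * x ^ 2 = 0) := fun h ↦
    hxy (eq_zero_of_sq_sub_mul_sq_eq_zero hw h.2).symm
  have h₄ : ¬(c * (x ^ E + y ^ E) = 0 ∧ -w * (x ^ 2 + y ^ 2) = 0) := fun h ↦
    h₁ ⟨(mul_eq_zero.1 h.1).resolve_left hc, (mul_eq_zero.1 h.2).resolve_left (neg_ne_zero.2 hw0)⟩
  simp only [hxy, h₁, h₂, h₃, h₄, if_false, add_zero]

theorem sum_sum_sq_sum_twisted (hψ : ψ.IsPrimitive) (hE : 4 ∣ E) (hE0 : E ≠ 0) (hc : c ≠ 0)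
    (hw : ¬IsSquare w) :
    ∑ α : F, ∑ β : F,
        (∑ x : F, (ψ (α * x ^ E + β * x ^ 2) + ψ (α * c * x ^ E - β * w * x ^ 2))) ^ 2 =
      4 * (Fintype.card F : R') ^ 2 := by
  rw [sum_sum_sq_sum]
  simp only [sum_sum_mul_twisted_pow hψ hE hE0 hc hw]
  simp [ite_and]

end TwistedSum

theorem stmt_15_general (p m k : ℕ) [Fact p.Prime] (hpo : Odd p)
    (hmod : p ^ k % 4 = 3)
    (F : Type*) [Field F] [Fintype F] [Algebra (ZMod p) F]
    (hF : Fintype.card F = p ^ m)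
    (π : Fˣ) (hπ : ∀ x : Fˣ, x ∈ Subgroup.zpowers π) :
    (∑ α : F, ∑ β : F,
        (∑ x : F,
          (Complex.exp (2 * Real.pi * Complex.I *
              ((Algebra.trace (ZMod p) F (α * x ^ (p ^ k + 1) + β * x ^ 2)).val : ℂ) / p)
            + Complex.exp (2 * Real.pi * Complex.I *
              ((Algebra.trace (ZMod p) F
                (α * (π : F) ^ ((p ^ k + 1) / 2) * x ^ (p ^ k + 1)
                  - β * (π : F) * x ^ 2)).val : ℂ) / p))) ^ 2) =
      4 * (p : ℂ) ^ (2 * m) := by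
  classical
  have : CharP F p := charP_of_injective_algebraMap (algebraMap (ZMod p) F).injective p
  have hF2 : ringChar F ≠ 2 := by
    rw [ringChar.eq F p]
    rintro rfl
    exact Nat.not_even_iff_odd.2 hpo even_two
  have hE : 4 ∣ p ^ k + 1 := Nat.dvd_of_mod_eq_zero (by omega)
  simp only [← traceAddChar_apply]
  rw [sum_sum_sq_sum_twisted (isPrimitive_traceAddChar p F) hE (by omega)
    (pow_ne_zero _ π.ne_zero) (not_isSquare_of_forall_mem_zpowers hF2 hπ), hF]
  push_cast
  ring

theorem stmt_15 (p m k : ℕ) (hp : p.Prime) [Fact p.Prime] (hpo : Odd p)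
    (hm : 0 < m) (hk : 0 < k)
    (hv : padicValNat 2 k < padicValNat 2 m) (hmod : p ^ k % 4 = 3)
    (F : Type*) [Field F] [Fintype F] [Algebra (ZMod p) F]
    (hF : Fintype.card F = p ^ m)
    (π : Fˣ) (hπ : ∀ x : Fˣ, x ∈ Subgroup.zpowers π) :
    (∑ α : F, ∑ β : F,
        (∑ x : F,
          (Complex.exp (2 * Real.pi * Complex.I *
              ((Algebra.trace (ZMod p) F (α * x ^ (p ^ k + 1) + β * x ^ 2)).val : ℂ) / p)
            + Complex.exp (2 * Real.pi * Complex.I *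
              ((Algebra.trace (ZMod p) F
                (α * (π : F) ^ ((p ^ k + 1) / 2) * x ^ (p ^ k + 1)
                  - β * (π : F) * x ^ 2)).val : ℂ) / p))) ^ 2) =
      4 * (p : ℂ) ^ (2 * m) :=
  stmt_15_general p m k hpo hmod F hF π hπ
end

section
/- Let p be an odd prime, m, k positive integers with k odd and m even, and d = gcd(m,k). Then π^{(p^m−1)/(p−1)} is a nonsquare element of F_{p^d}, where π is a primitive element of F_{p^m}; i.e., the generator of F_p* is a nonsquare in F_{p^d}. -/
/-!
The element `π ^ ((p ^ m - 1) / (p - 1))` has order exactly `p - 1`. A nonzero square `y ^ 2`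
with `y ^ q = y`, `q` odd, has order dividing `(q - 1) / 2`, since `y ^ (q - 1) = 1`. So a square
root in `𝔽_{p^d}` would give `2 (p - 1) ∣ p ^ d - 1`, i.e. `1 + p + ⋯ + p ^ (d - 1)` even, which
fails because it is a sum of `d` odd terms and `d`, a divisor of `k`, is odd.
-/

open Finset

lemma Nat.odd_geom_sum {a n : ℕ} (ha : Odd a) (hn : Odd n) : Odd (∑ i ∈ range n, a ^ i) := by
  rw [odd_sum_iff_odd_card_odd, filter_true_of_mem fun i _ ↦ ha.pow, card_range]
  exact hn

lemma Nat.not_two_mul_sub_one_dvd_pow_sub_one {a n : ℕ} (ha : Odd a) (ha₁ : a ≠ 1) (hn : Odd n) :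
    ¬ 2 * (a - 1) ∣ a ^ n - 1 := by
  have ha₀ : 0 < a - 1 := by have := ha.pos; omega
  rw [← geom_sum_mul_of_one_le ha.pos n, Nat.mul_dvd_mul_iff_right ha₀]
  exact (Nat.odd_geom_sum ha hn).not_two_dvd_nat

lemma two_mul_orderOf_dvd_sub_one_of_sq_eq {G₀ : Type*} [GroupWithZero G₀] {q : ℕ} (hq : Odd q)
    {y z : G₀} (hz : z ≠ 0) (hyq : y ^ q = y) (hyz : y ^ 2 = z) : 2 * orderOf z ∣ q - 1 := by
  have hy : y ≠ 0 := by rintro rfl; exact hz (by simp [← hyz])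
  have hy_pow : y ^ (q - 1) = 1 := by rw [pow_sub₀ y hy hq.pos, hyq, pow_one, mul_inv_cancel₀ hy]
  obtain ⟨r, hr⟩ := Nat.Odd.sub_odd hq odd_one
  have hz_pow : z ^ r = 1 := by rw [← hyz, ← pow_mul, two_mul, ← hr, hy_pow]
  rw [hr, ← two_mul]
  exact mul_dvd_mul_left 2 (orderOf_dvd_of_pow_eq_one hz_pow)

theorem stmt_19_general (p m k : ℕ) (hpo : Odd p) (hko : Odd k)
    (F : Type*) [Field F] [Fintype F] (hF : Fintype.card F = p ^ m)
    (π : Fˣ) (hπ : ∀ x : Fˣ, x ∈ Subgroup.zpowers π) :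
    ¬ ∃ y : F, y ^ (p ^ Nat.gcd m k) = y ∧
        y ^ 2 = (π : F) ^ ((p ^ m - 1) / (p - 1)) := by
  rintro ⟨y, hyq, hyz⟩
  have hπ_order : orderOf (π : F) = p ^ m - 1 := by
    rw [orderOf_units, orderOf_eq_card_of_forall_mem_zpowers hπ, Nat.card_units,
      Nat.card_eq_fintype_card, hF]
  have hπ_order_pos : 0 < orderOf (π : F) := by rw [orderOf_units]; exact orderOf_pos π
  have hz_order : orderOf ((π : F) ^ ((p ^ m - 1) / (p - 1))) = p - 1 := by
    rw [← hπ_order]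
    exact orderOf_pow_orderOf_div hπ_order_pos.ne' (hπ_order ▸ Nat.sub_one_dvd_pow_sub_one p m)
  have hp₁ : p ≠ 1 := by rintro rfl; simp [hπ_order] at hπ_order_pos
  have hd : Odd (Nat.gcd m k) := hko.of_dvd_nat (Nat.gcd_dvd_right m k)
  have hdvd := two_mul_orderOf_dvd_sub_one_of_sq_eq hpo.pow (pow_ne_zero _ π.ne_zero) hyq hyz
  rw [hz_order] at hdvd
  exact Nat.not_two_mul_sub_one_dvd_pow_sub_one hpo hp₁ hd hdvd

theorem stmt_19 (p m k : ℕ) (hp : p.Prime) (hpo : Odd p) (hm : 0 < m) (hk : 0 < k)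
    (hko : Odd k) (hme : Even m)
    (F : Type*) [Field F] [Fintype F] (hF : Fintype.card F = p ^ m)
    (π : Fˣ) (hπ : ∀ x : Fˣ, x ∈ Subgroup.zpowers π) :
    ¬ ∃ y : F, y ^ (p ^ Nat.gcd m k) = y ∧
        y ^ 2 = (π : F) ^ ((p ^ m - 1) / (p - 1)) :=
  stmt_19_general p m k hpo hko F hF π hπ
end
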